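/- Let M > 0 and define g₁(s) := (2/r(s)) · ( s/r(s) − 1 − 2 s μ(s)/r(s) ) and g₂(s) := 2 ( (s/r(s) − 1) − 3 s μ(s)/(2 r(s)) ). Then there is a constant C = C(M) > 0 such that for all s ∈ ℝ: |g₁(s)| ≤ C (1 + |s|) · max{log r(s), 1} / r(s)³ and |g₂(s)| ≤ C (1 + |s|) · max{log r(s), 1} / r(s)². -/

import Mathlib

open Real

noncomputable section

/-- `r` is the Schwarzschild area-radius of mass `M` in the Regge-Wheeler tortoise
coordinate: `r(s) > 2M`, `r' = 1 - 2M/r`, `r(0) = 3M`. -/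
def IsTortoise (M : ℝ) (r : ℝ → ℝ) : Prop :=
  (∀ s, 2 * M < r s) ∧ (∀ s, HasDerivAt r (1 - 2 * M / r s) s) ∧ r 0 = 3 * M

/-- `μ(s) = 2M / r(s)` -/
def muS (M : ℝ) (r : ℝ → ℝ) (s : ℝ) : ℝ := 2 * M / r s

/-- the coefficient `g₁(r*) = (2/r)(r*/r - 1 - 2r*μ/r)` of `∂_{r*}φ` in the
inhomogeneity of the equation for `ψ = Sφ`. -/
def g1 (M : ℝ) (r : ℝ → ℝ) (s : ℝ) : ℝ :=
  (2 / r s) * (s / r s - 1 - 2 * s * muS M r s / r s)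

/-- the coefficient `g₂(r*) = 2((r*/r - 1) - 3r*μ/(2r))` of `Δ̸φ` in the
inhomogeneity of the equation for `ψ = Sφ`. -/
def g2 (M : ℝ) (r : ℝ → ℝ) (s : ℝ) : ℝ :=
  2 * ((s / r s - 1) - 3 * s * muS M r s / (2 * r s))

set_option maxHeartbeats 1000000 in
/-- Proposition 4, part 2 of the paper: the error coefficients `g₁, g₂` decay like
`(log r)/r²` (resp. `(log r)/r`) toward spatial infinity and grow only linearly in
`|r*|` toward the event horizon. -/
theorem g1_g2_bounds
    (M : ℝ) (hM : 0 < M) (r : ℝ → ℝ) (hr : IsTortoise M r) :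
    ∃ C : ℝ, 0 < C ∧ ∀ s : ℝ,
      |g1 M r s| ≤ C * (1 + |s|) * max (Real.log (r s)) 1 / (r s) ^ 3 ∧
      |g2 M r s| ≤ C * (1 + |s|) * max (Real.log (r s)) 1 / (r s) ^ 2 := by
  obtain ⟨hr2M, hd, hr0⟩ := hr
  have hrpos : ∀ s, 0 < r s := fun s => lt_trans (by linarith) (hr2M s)
  have hrne : ∀ s, r s ≠ 0 := fun s => (hrpos s).ne'
  have hmu_lt : ∀ s, 2 * M / r s < 1 := fun s => (div_lt_one (hrpos s)).2 (hr2M s)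
  have hmu_pos : ∀ s, 0 < 2 * M / r s := fun s => div_pos (by linarith) (hrpos s)
  have hdiff : Differentiable ℝ r := fun s => (hd s).differentiableAt
  -- r is monotone
  have hmono : Monotone r := by
    refine monotone_of_deriv_nonneg hdiff (fun s => ?_)
    rw [(hd s).deriv]; linarith [hmu_lt s]
  -- h(s) = s - r s is monotone
  have hdH : ∀ s, HasDerivAt (fun t => t - r t) (2 * M / r s) s := by
    intro s
    have h := (hasDerivAt_id s).sub (hd s)
    exact h.congr_deriv (by ring)
  have hHmono : Monotone (fun t => t - r t) := by
    refine monotone_of_deriv_nonneg (fun s => (hdH s).differentiableAt) (fun s => ?_)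
    rw [(hdH s).deriv]; exact (hmu_pos s).le
  -- basic consequences
  have hub : ∀ s, 0 ≤ s → r s ≤ s + 3 * M := by
    intro s hs
    have := hHmono hs
    simp only at this
    rw [hr0] at this; linarith
  have hlb3 : ∀ s, 0 ≤ s → 3 * M ≤ r s := fun s hs => hr0 ▸ hmono hs
  have hub3 : ∀ s, s ≤ 0 → r s ≤ 3 * M := fun s hs => hr0 ▸ hmono hs
  have hsr_lb : ∀ s, 0 ≤ s → -(3 * M) ≤ s - r s := by
    intro s hs
    have := hHmono hs
    simp only at this
    rw [hr0] at this; linarith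
  -- q(s) = s - r s - 6M log (r s) is antitone on [0, ∞)
  have hdQ : ∀ s, HasDerivAt (fun t => t - r t - 6 * M * Real.log (r t))
      (2 * M / r s - 6 * M * ((r s)⁻¹ * (1 - 2 * M / r s))) s := by
    intro s
    have hlog : HasDerivAt (fun t => Real.log (r t)) ((r s)⁻¹ * (1 - 2 * M / r s)) s :=
      (Real.hasDerivAt_log (hrne s)).comp s (hd s)
    exact (hdH s).sub (hlog.const_mul (6 * M))
  have hQanti : AntitoneOn (fun t => t - r t - 6 * M * Real.log (r t)) (Set.Ici 0) := by
    have hcontQ : Continuous (fun t => t - r t - 6 * M * Real.log (r t)) :=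
      continuous_iff_continuousAt.2 (fun x => (hdQ x).differentiableAt.continuousAt)
    refine antitoneOn_of_deriv_nonpos (convex_Ici 0) hcontQ.continuousOn ?_ ?_
    · intro x hx; exact (hdQ x).differentiableAt.differentiableWithinAt
    · intro x hx
      rw [interior_Ici] at hx
      rw [(hdQ x).deriv]
      have hrx := hrpos x
      have h3 : 3 * M ≤ r x := hlb3 x (le_of_lt hx)
      have heq : 2 * M / r x - 6 * M * ((r x)⁻¹ * (1 - 2 * M / r x))
          = (2 * M * r x - 6 * M * (r x - 2 * M)) / (r x) ^ 2 := by
        field_simp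
      rw [heq]
      apply div_nonpos_of_nonpos_of_nonneg
      · nlinarith
      · positivity
  -- continuity of r follows from differentiability (used above via `continuity`?)
  -- key constants
  set L : ℝ := |Real.log (3 * M)| with hL
  have hLnn : 0 ≤ L := abs_nonneg _
  set C₁ : ℝ := 3 * M + 6 * M * (1 + L) with hC₁
  have hC₁pos : 0 < C₁ := by positivity
  -- claim A : for s ≥ 0, |s - r s| ≤ C₁ * max (log (r s)) 1
  have claimA : ∀ s, 0 ≤ s → |s - r s| ≤ C₁ * max (Real.log (r s)) 1 := by
    intro s hs
    have hq := hQanti (Set.self_mem_Ici) (Set.mem_Ici.2 hs) hs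
    simp only at hq
    rw [hr0] at hq
    have hlog3 : Real.log (3 * M) ≤ Real.log (r s) :=
      Real.log_le_log (by positivity) (hlb3 s hs)
    have hD : 0 ≤ Real.log (r s) - Real.log (3 * M) := by linarith
    have hup : s - r s ≤ -(3 * M) + 6 * M * (Real.log (r s) - Real.log (3 * M)) := by
      linarith
    have hlo := hsr_lb s hs
    have hmax : 1 ≤ max (Real.log (r s)) 1 := le_max_right _ _
    have hlog_le : Real.log (r s) ≤ max (Real.log (r s)) 1 := le_max_left _ _
    have hLlog : -Real.log (3 * M) ≤ L := neg_le_abs _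
    have habs : |s - r s| ≤ 3 * M + 6 * M * (Real.log (r s) - Real.log (3 * M)) := by
      rw [abs_le]; constructor <;> nlinarith
    have hDle : Real.log (r s) - Real.log (3 * M) ≤ (1 + L) * max (Real.log (r s)) 1 := by
      nlinarith
    nlinarith
  set C₂ : ℝ := (C₁ + 3 * M + 1) * (3 * M + 1) with hC₂
  have hC₂pos : 0 < C₂ := by positivity
  -- key : |s - r s| * r s ≤ C₂ * (1 + |s|) * max (log (r s)) 1
  have key : ∀ s, |s - r s| * r s ≤ C₂ * (1 + |s|) * max (Real.log (r s)) 1 := by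
    intro s
    have hmax : 1 ≤ max (Real.log (r s)) 1 := le_max_right _ _
    have hsnn : 0 ≤ |s| := abs_nonneg s
    rcases le_or_gt 0 s with hs | hs
    · have hA := claimA s hs
      have hB := hub s hs
      have habs : |s| = s := abs_of_nonneg hs
      have h1 : |s - r s| * r s ≤ (C₁ * max (Real.log (r s)) 1) * (s + 3 * M) := by
        apply mul_le_mul hA hB (le_of_lt (hrpos s))
        positivity
      refine h1.trans ?_
      rw [habs, hC₂]
      have h2 : C₁ * (s + 3 * M) ≤ (C₁ + 3 * M + 1) * (3 * M + 1) * (1 + s) := by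
        nlinarith [hC₁pos.le, hM.le, hs, mul_nonneg hC₁pos.le hs, mul_nonneg hM.le hs,
          mul_nonneg (mul_nonneg hC₁pos.le hM.le) hs]
      have h3 := mul_le_mul_of_nonneg_right h2 (le_trans zero_le_one hmax)
      nlinarith [h3]
    · have hrle : r s ≤ 3 * M := hub3 s (le_of_lt hs)
      have habs : |s - r s| ≤ |s| + 3 * M := by
        have := abs_sub s (r s)
        have : |s - r s| ≤ |s| + |r s| := abs_sub s (r s)
        rw [abs_of_pos (hrpos s)] at this
        linarith
      have h1 : |s - r s| * r s ≤ (|s| + 3 * M) * (3 * M) := by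
        apply mul_le_mul habs hrle (le_of_lt (hrpos s))
        positivity
      refine h1.trans ?_
      rw [hC₂]
      have h2 : (|s| + 3 * M) * (3 * M) ≤ (C₁ + 3 * M + 1) * (3 * M + 1) * (1 + |s|) := by
        nlinarith [hC₁pos.le, hM.le, hsnn, mul_nonneg hC₁pos.le hsnn, mul_nonneg hM.le hsnn,
          mul_nonneg (mul_nonneg hC₁pos.le hM.le) hsnn, mul_nonneg hM.le (mul_nonneg hM.le hsnn)]
      have h3 := mul_le_mul_of_nonneg_right h2 (le_trans zero_le_one hmax)
      have h4 : (|s| + 3 * M) * (3 * M) ≤ (|s| + 3 * M) * (3 * M) * (max (Real.log (r s)) 1) := by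
        nlinarith [mul_nonneg (by linarith : (0:ℝ) ≤ |s| + 3 * M) hM.le]
      nlinarith [h3, h4]
  refine ⟨2 * C₂ + 8 * M, by positivity, fun s => ?_⟩
  have hmax : 1 ≤ max (Real.log (r s)) 1 := le_max_right _ _
  have hmaxnn : 0 ≤ max (Real.log (r s)) 1 := by linarith
  have hsnn : 0 ≤ |s| := abs_nonneg s
  have hks := key s
  have hsle : |s| ≤ (1 + |s|) * max (Real.log (r s)) 1 := by nlinarith
  constructor
  · have hg1 : g1 M r s = (2 * (s - r s) * r s - 8 * M * s) / (r s) ^ 3 := by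
      unfold g1 muS; field_simp [hrne s]; ring
    have hnum : |2 * (s - r s) * r s - 8 * M * s| ≤ 2 * (|s - r s| * r s) + 8 * M * |s| := by
      have h := abs_sub (2 * (s - r s) * r s) (8 * M * s)
      have e1 : |2 * (s - r s) * r s| = 2 * (|s - r s| * r s) := by
        rw [abs_mul, abs_mul, abs_of_pos (hrpos s), abs_two]; ring
      have e2 : |8 * M * s| = 8 * M * |s| := by
        rw [abs_mul, abs_mul, abs_of_pos hM, (by norm_num : |(8:ℝ)| = 8)]
      rw [e1, e2] at h; exact h
    rw [hg1, abs_div, abs_of_pos (pow_pos (hrpos s) 3),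
      div_le_div_iff_of_pos_right (pow_pos (hrpos s) 3)]
    have h8 := mul_le_mul_of_nonneg_left hsle (by linarith : (0:ℝ) ≤ 8 * M)
    linarith [hnum, hks, h8]
  · have hg2 : g2 M r s = (2 * (s - r s) * r s - 6 * M * s) / (r s) ^ 2 := by
      unfold g2 muS; field_simp [hrne s]; ring
    have hnum : |2 * (s - r s) * r s - 6 * M * s| ≤ 2 * (|s - r s| * r s) + 6 * M * |s| := by
      have h := abs_sub (2 * (s - r s) * r s) (6 * M * s)
      have e1 : |2 * (s - r s) * r s| = 2 * (|s - r s| * r s) := by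
        rw [abs_mul, abs_mul, abs_of_pos (hrpos s), abs_two]; ring
      have e2 : |6 * M * s| = 6 * M * |s| := by
        rw [abs_mul, abs_mul, abs_of_pos hM, (by norm_num : |(6:ℝ)| = 6)]
      rw [e1, e2] at h; exact h
    rw [hg2, abs_div, abs_of_pos (pow_pos (hrpos s) 2),
      div_le_div_iff_of_pos_right (pow_pos (hrpos s) 2)]
    have h6 := mul_le_mul_of_nonneg_left hsle (by linarith : (0:ℝ) ≤ 6 * M)
    have hmnn2 : 0 ≤ C₂ * (1 + |s|) * max (Real.log (r s)) 1 := by positivity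
    linarith [hnum, hks, h6, mul_nonneg hM.le hmaxnn, mul_nonneg (mul_nonneg hM.le hsnn) hmaxnn]
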